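/- Let c > 0, γ > 2, and let r > 0 be fixed. If f(t) = ρ'(t+r) √(ρ(r)) / (π ρ(t+r) √(ρ(t+r) − ρ(r))) with ρ(t) = c · t^γ, then ∫₀^∞ t f(t) dt < ∞; i.e., the random time S(r) with this density has finite expectation. -/

import Mathlib

/-!
The constant `c` cancels: `f t = γ r^(γ/2) / (π (t + r) √((t + r)^γ - r^γ))`.
For `t ≤ r` the radicand is at least `r^(γ-1) t`, so `t f t = O(√t)` is bounded;
for `t ≥ r` it is at least `(t + r)^γ / 2`, so `t f t = O(t^(-γ/2))`, which is
integrable at infinity because `γ > 2`.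
-/

open Real Set MeasureTheory

lemma rpow_sub_one_mul_sub_le_rpow_sub_rpow {r x γ : ℝ} (hr : 0 < r) (hrx : r ≤ x)
    (hγ : 1 ≤ γ) : r ^ (γ - 1) * (x - r) ≤ x ^ γ - r ^ γ := by
  have hx : 0 < x := hr.trans_le hrx
  have hmono : r ^ (γ - 1) ≤ x ^ (γ - 1) := rpow_le_rpow hr.le hrx (by linarith)
  have hsplit : ∀ y : ℝ, 0 < y → y ^ γ = y ^ (γ - 1) * y := fun y hy => by
    rw [← rpow_add_one hy.ne', sub_add_cancel]
  rw [hsplit r hr, hsplit x hx]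
  nlinarith

lemma half_rpow_le_rpow_sub_rpow {r x γ : ℝ} (hr : 0 ≤ r) (hrx : 2 * r ≤ x) (hγ : 1 ≤ γ) :
    x ^ γ / 2 ≤ x ^ γ - r ^ γ := by
  have htwo : (2 : ℝ) ≤ 2 ^ γ := by
    simpa using rpow_le_rpow_of_exponent_le one_le_two hγ
  have hdouble : (2 * r) ^ γ ≤ x ^ γ := rpow_le_rpow (by positivity) hrx (by linarith)
  rw [mul_rpow zero_le_two hr] at hdouble
  nlinarith [rpow_nonneg hr γ]

lemma div_mul_sqrt_rpow_sub_rpow_le_of_le {r t γ : ℝ} (hr : 0 < r) (hγ : 1 ≤ γ)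
    (ht : 0 < t) (htr : t ≤ r) :
    t / ((t + r) * √((t + r) ^ γ - r ^ γ)) ≤ √r / (r * √(r ^ (γ - 1))) := by
  have hlower : r ^ (γ - 1) * t ≤ (t + r) ^ γ - r ^ γ := by
    simpa using rpow_sub_one_mul_sub_le_rpow_sub_rpow hr (le_add_of_nonneg_left ht.le) hγ
  have hpos : 0 < r ^ (γ - 1) := rpow_pos_of_pos hr _
  calc t / ((t + r) * √((t + r) ^ γ - r ^ γ))
      ≤ t / (r * √(r ^ (γ - 1) * t)) := by
        gcongr
        linarith
    _ = √t / (r * √(r ^ (γ - 1))) := by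
        rw [sqrt_mul hpos.le]
        have hsq : √t * √t = t := mul_self_sqrt ht.le
        have : 0 < √t := sqrt_pos.mpr ht
        field_simp
        linarith
    _ ≤ √r / (r * √(r ^ (γ - 1))) := by gcongr

lemma div_mul_sqrt_rpow_sub_rpow_le_of_ge {r t γ : ℝ} (hr : 0 < r) (hγ : 1 ≤ γ)
    (hrt : r ≤ t) :
    t / ((t + r) * √((t + r) ^ γ - r ^ γ)) ≤ √2 * t ^ (-(γ / 2)) := by
  have ht : 0 < t := hr.trans_le hrt
  have hx : 0 < t + r := by linarith
  have hlower : (t + r) ^ γ / 2 ≤ (t + r) ^ γ - r ^ γ :=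
    half_rpow_le_rpow_sub_rpow hr.le (by linarith) hγ
  have hsqrt : √((t + r) ^ γ / 2) = (t + r) ^ (γ / 2) / √2 := by
    rw [sqrt_div' _ zero_le_two, sqrt_eq_rpow, ← rpow_mul hx.le]
    ring_nf
  calc t / ((t + r) * √((t + r) ^ γ - r ^ γ))
      ≤ t / ((t + r) * √((t + r) ^ γ / 2)) := by
        have : 0 < (t + r) ^ γ := rpow_pos_of_pos hx γ
        gcongr
    _ ≤ 1 / √((t + r) ^ γ / 2) := by
        rw [← div_div]
        gcongr
        exact div_le_one_of_le₀ (by linarith) hx.le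
    _ = √2 * (t + r) ^ (-(γ / 2)) := by
        rw [hsqrt, rpow_neg hx.le]
        field_simp
    _ ≤ √2 * t ^ (-(γ / 2)) :=
        mul_le_mul_of_nonneg_left
          (rpow_le_rpow_of_nonpos ht (by linarith) (by linarith)) (sqrt_nonneg 2)

lemma integrableOn_Ioi_div_mul_sqrt_rpow_sub_rpow {r γ : ℝ} (hr : 0 < r) (hγ : 2 < γ) :
    IntegrableOn (fun t => t / ((t + r) * √((t + r) ^ γ - r ^ γ))) (Ioi 0) := by
  have hmeas : Measurable fun t : ℝ => t / ((t + r) * √((t + r) ^ γ - r ^ γ)) := by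
    fun_prop
  have hγ1 : 1 ≤ γ := by linarith
  rw [← Ioc_union_Ioi_eq_Ioi hr.le, integrableOn_union]
  constructor
  · refine Integrable.mono'
      (integrableOn_const (C := √r / (r * √(r ^ (γ - 1)))) measure_Ioc_lt_top.ne)
      hmeas.aestronglyMeasurable ?_
    filter_upwards [ae_restrict_mem measurableSet_Ioc] with t ⟨ht, htr⟩
    rw [norm_of_nonneg (by positivity)]
    exact div_mul_sqrt_rpow_sub_rpow_le_of_le hr hγ1 ht htr
  · refine Integrable.mono'
      ((integrableOn_Ioi_rpow_of_lt (a := -(γ / 2)) (by linarith) hr).const_mul √2)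
      hmeas.aestronglyMeasurable ?_
    filter_upwards [ae_restrict_mem measurableSet_Ioi] with t hrt
    have ht : 0 < t := hr.trans hrt
    rw [norm_of_nonneg (by positivity)]
    exact div_mul_sqrt_rpow_sub_rpow_le_of_ge hr hγ1 hrt.le

lemma power_time_change_density_eq {c γ r t : ℝ} (hc : 0 < c) (hx : 0 < t + r) :
    c * γ * (t + r) ^ (γ - 1) * √(c * r ^ γ) /
        (π * (c * (t + r) ^ γ) * √(c * (t + r) ^ γ - c * r ^ γ)) =
      γ * √(r ^ γ) / π * (1 / ((t + r) * √((t + r) ^ γ - r ^ γ))) := by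
  rw [← mul_sub, sqrt_mul hc.le, sqrt_mul hc.le, rpow_sub_one hx.ne']
  have : 0 < √c := sqrt_pos.mpr hc
  have : 0 < (t + r) ^ γ := rpow_pos_of_pos hx γ
  field_simp

theorem finite_expectation_of_power_time_change (c γ r : ℝ) (hc : 0 < c) (hγ : 2 < γ)
    (hr : 0 < r) :
    let ρ : ℝ → ℝ := fun t => c * t ^ γ
    let ρ' : ℝ → ℝ := fun t => c * γ * t ^ (γ - 1)
    let f : ℝ → ℝ := fun t =>
      ρ' (t + r) * Real.sqrt (ρ r) / (π * ρ (t + r) * Real.sqrt (ρ (t + r) - ρ r))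
    MeasureTheory.IntegrableOn (fun t => t * f t) (Set.Ioi 0) := by
  intro ρ ρ' f
  refine IntegrableOn.congr_fun ((integrableOn_Ioi_div_mul_sqrt_rpow_sub_rpow hr hγ).const_mul
    (γ * √(r ^ γ) / π)) (fun t ht => ?_) measurableSet_Ioi
  have hx : 0 < t + r := by linarith [mem_Ioi.mp ht]
  simp only [f, ρ, ρ', power_time_change_density_eq hc hx]
  ring
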